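/- arXiv:2502.00898 — 2 statements merged into one kernel-verified Lean document; each statement's English description precedes it below -/
import Mathlib

section
/- Let R be a commutative ring, X : R → R a derivation applied to matrices entrywise, and J the 4×4 matrix over R with block form [[0₂, I₂], [−I₂, 0₂]]. Let A be a 4×4 matrix over R satisfying AᵀJ + JA = 0, let U be a 4×2 matrix over R, define E := A·U − X(U) and L := Uᵀ·J·U. Then X(L) = −(Eᵀ·J·U + Uᵀ·J·E). -/
open Matrix

section Aux

variable {R : Type*} [CommRing R] (X : R → R)
  (hadd : ∀ a b : R, X (a + b) = X a + X b)
  (hmul : ∀ a b : R, X (a * b) = X a * b + a * X b)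

include hadd in
lemma Xzero : X 0 = 0 := by
  have := hadd 0 0; simpa using this.symm

include hadd in
lemma Xneg (a : R) : X (-a) = -X a := by
  have := hadd a (-a)
  rw [add_neg_cancel, Xzero X hadd] at this
  exact (neg_eq_of_add_eq_zero_right this.symm).symm

include hmul in
lemma Xone : X 1 = 0 := by
  have := hmul 1 1
  simpa using this

include hadd in
lemma Xsum {ι : Type*} (s : Finset ι) (f : ι → R) :
    X (∑ i ∈ s, f i) = ∑ i ∈ s, X (f i) := by
  classical
  induction s using Finset.induction with
  | empty => simpa using Xzero X hadd
  | insert _ _ h ih => rw [Finset.sum_insert h, Finset.sum_insert h, hadd, ih]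

include hadd hmul in
lemma map_mul_matrix {m n p : Type*} [Fintype n]
    (M : Matrix m n R) (N : Matrix n p R) :
    (M * N).map X = M.map X * N + M * N.map X := by
  ext i j
  simp only [Matrix.map_apply, Matrix.mul_apply, Matrix.add_apply]
  rw [Xsum X hadd]
  rw [← Finset.sum_add_distrib]
  exact Finset.sum_congr rfl fun k _ => by rw [hmul]

end Aux

/-- Let `X : R → R` be a derivation on a commutative ring `R`, applied to
matrices entrywise, `J` the standard symplectic `4 × 4` matrix `[[0₂, I₂], [−I₂, 0₂]]`,
`A` a `4 × 4` matrix with `AᵀJ + JA = 0`, `U` a `4 × 2` matrix, `E := A·U − X(U)` and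
`L := Uᵀ·J·U`. Then `X(L) = −(Eᵀ·J·U + Uᵀ·J·E)`. -/
theorem derivation_lagrangian_defect {R : Type*} [CommRing R] (X : R → R)
    (hadd : ∀ a b : R, X (a + b) = X a + X b)
    (hmul : ∀ a b : R, X (a * b) = X a * b + a * X b)
    (J : Matrix (Fin 2 ⊕ Fin 2) (Fin 2 ⊕ Fin 2) R)
    (hJ : J = Matrix.fromBlocks 0 1 (-1) 0)
    (A : Matrix (Fin 2 ⊕ Fin 2) (Fin 2 ⊕ Fin 2) R)
    (hA : Aᵀ * J + J * A = 0)
    (U : Matrix (Fin 2 ⊕ Fin 2) (Fin 2) R)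
    (E : Matrix (Fin 2 ⊕ Fin 2) (Fin 2) R)
    (hE : E = A * U - U.map X)
    (L : Matrix (Fin 2) (Fin 2) R)
    (hL : L = Uᵀ * J * U) :
    L.map X = -(Eᵀ * J * U + Uᵀ * J * E) := by
  have hJmap : J.map X = 0 := by
    subst hJ
    ext i j
    rcases i with i | i <;> rcases j with j | j <;>
      simp [Matrix.fromBlocks, Matrix.map_apply, Matrix.one_apply, Xzero X hadd,
        Xone X hmul, Xneg X hadd] <;>
      split <;> simp [Xzero X hadd, Xone X hmul]
  have hT : (Uᵀ).map X = (U.map X)ᵀ := by ext i j; rfl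
  have hXL : L.map X = (U.map X)ᵀ * J * U + Uᵀ * J * U.map X := by
    rw [hL, map_mul_matrix X hadd hmul, map_mul_matrix X hadd hmul, hJmap, hT]
    simp [Matrix.add_mul]
  rw [hXL, hE]
  have : (A * U - U.map X)ᵀ * J * U + Uᵀ * J * (A * U - U.map X)
      = Uᵀ * (Aᵀ * J + J * A) * U - ((U.map X)ᵀ * J * U + Uᵀ * J * U.map X) := by
    simp only [Matrix.transpose_sub, Matrix.transpose_mul, Matrix.sub_mul, Matrix.mul_sub,
      Matrix.add_mul, Matrix.mul_add, Matrix.mul_assoc]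
    abel
  rw [this, hA]
  simp
end

section
/- Let R be a commutative ring, X : R → R a derivation applied to matrices entrywise, and J the 4×4 matrix over R with block form [[0₂, I₂], [−I₂, 0₂]]. Let A be a 4×4 matrix over R satisfying AᵀJ + JA = 0, let U be a 4×2 matrix over R such that UᵀU is invertible with inverse N, and set E := A·U − X(U). Then −Uᵀ·J·( A·(J·U·N) − X(J·U·N) ) = −Eᵀ·U·N. -/
open Matrix

lemma mapX_mul' {R : Type*} [CommRing R] (X : R → R)
    (hadd : ∀ a b : R, X (a + b) = X a + X b)
    (hmul : ∀ a b : R, X (a * b) = X a * b + a * X b)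
    {m n p : Type*} [Fintype n]
    (M : Matrix m n R) (P : Matrix n p R) :
    (M * P).map X = M.map X * P + M * P.map X := by
  ext i j
  simp only [Matrix.map_apply, Matrix.mul_apply, Matrix.add_apply]
  rw [show X (∑ k, M i k * P k j) = ∑ k, X (M i k * P k j) from
    map_sum (AddMonoidHom.mk' X hadd) _ _]
  rw [← Finset.sum_add_distrib]
  exact Finset.sum_congr rfl fun k _ => hmul _ _

/-- Let `X : R → R` be a derivation on a commutative ring `R`, applied to
matrices entrywise, `J` the standard symplectic `4 × 4` matrix `[[0₂, I₂], [−I₂, 0₂]]`,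
`A` a `4 × 4` matrix with `AᵀJ + JA = 0`, `U` a `4 × 2` matrix with `UᵀU` invertible with
inverse `N`, and `E := A·U − X(U)`. Then
`−Uᵀ·J·( A·(J·U·N) − X(J·U·N) ) = −Eᵀ·U·N`. -/
theorem derivation_symplectic_frame_first_component {R : Type*} [CommRing R] (X : R → R)
    (hadd : ∀ a b : R, X (a + b) = X a + X b)
    (hmul : ∀ a b : R, X (a * b) = X a * b + a * X b)
    (J : Matrix (Fin 2 ⊕ Fin 2) (Fin 2 ⊕ Fin 2) R)
    (hJ : J = Matrix.fromBlocks 0 1 (-1) 0)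
    (A : Matrix (Fin 2 ⊕ Fin 2) (Fin 2 ⊕ Fin 2) R)
    (hA : Aᵀ * J + J * A = 0)
    (U : Matrix (Fin 2 ⊕ Fin 2) (Fin 2) R)
    (N : Matrix (Fin 2) (Fin 2) R)
    (hN₁ : Uᵀ * U * N = 1) (hN₂ : N * (Uᵀ * U) = 1)
    (E : Matrix (Fin 2 ⊕ Fin 2) (Fin 2) R)
    (hE : E = A * U - U.map X) :
    -(Uᵀ * J * (A * (J * U * N) - (J * U * N).map X)) = -(Eᵀ * U * N) := by
  have hX0 : X 0 = 0 := by have h := hadd 0 0; simpa using h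
  have hX1 : X 1 = 0 := by have h := hmul 1 1; simpa using h
  have hXneg : ∀ a : R, X (-a) = -X a := by
    intro a
    have h : X a + X (-a) = 0 := by rw [← hadd]; simp [hX0]
    exact eq_neg_of_add_eq_zero_right h
  have h1 : (1 : Matrix (Fin 2) (Fin 2) R).map X = 0 := by
    ext i j
    by_cases h : i = j <;> simp [Matrix.one_apply, h, hX0, hX1]
  have hJX : J.map X = 0 := by
    subst hJ
    ext (i | i) (j | j) <;>
      simp [Matrix.fromBlocks, Matrix.one_apply, hX0, hX1, hXneg] <;>
      split_ifs <;> simp [hX0, hX1, hXneg]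
  have hJJ : J * J = -1 := by
    rw [hJ]
    simp only [Matrix.fromBlocks_multiply]
    ext (i | i) (j | j) <;> simp [Matrix.one_apply]
  have hJA : J * A = -(Aᵀ * J) := eq_neg_of_add_eq_zero_right hA
  have hJA' : ∀ (x : Matrix (Fin 2 ⊕ Fin 2) (Fin 2) R), J * (A * x) = -(Aᵀ * (J * x)) := by
    intro x; rw [← Matrix.mul_assoc, hJA, Matrix.neg_mul, Matrix.mul_assoc]
  have hJJ' : ∀ (x : Matrix (Fin 2 ⊕ Fin 2) (Fin 2) R), J * (J * x) = -x := by
    intro x; rw [← Matrix.mul_assoc, hJJ, Matrix.neg_mul, Matrix.one_mul]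
  have hSN : ((Uᵀ * U).map X) * N + (Uᵀ * U) * N.map X = 0 := by
    have h := congrArg (fun M => M.map X) hN₁
    rw [mapX_mul' X hadd hmul (Uᵀ * U) N, h1] at h
    exact h
  have hS : (Uᵀ * U).map X = (U.map X)ᵀ * U + Uᵀ * U.map X := by
    rw [mapX_mul' X hadd hmul Uᵀ U, Matrix.transpose_map]
  have hUUXn : Uᵀ * (U * N.map X) = -((U.map X)ᵀ * (U * N) + Uᵀ * (U.map X * N)) := by
    have h : (Uᵀ * U) * N.map X = -(((U.map X)ᵀ * U + Uᵀ * U.map X) * N) :=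
      eq_neg_of_add_eq_zero_right (by rw [← hS]; exact hSN)
    calc Uᵀ * (U * N.map X) = (Uᵀ * U) * N.map X := by rw [Matrix.mul_assoc]
      _ = -(((U.map X)ᵀ * U + Uᵀ * U.map X) * N) := h
      _ = -((U.map X)ᵀ * (U * N) + Uᵀ * (U.map X * N)) := by
          rw [Matrix.add_mul, Matrix.mul_assoc, Matrix.mul_assoc]
  have hmapJUN : (J * U * N).map X = J * U.map X * N + J * U * N.map X := by
    rw [mapX_mul' X hadd hmul (J * U) N, mapX_mul' X hadd hmul J U, hJX]
    simp
  rw [hmapJUN, hE]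
  simp only [Matrix.transpose_sub, Matrix.transpose_mul, Matrix.mul_sub, Matrix.sub_mul,
    Matrix.mul_add, Matrix.add_mul, Matrix.mul_assoc, hJA', hJJ', Matrix.mul_neg,
    Matrix.neg_mul, neg_neg, neg_sub, hUUXn]
  abel
end
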